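/- arXiv:2602.01440 — 5 statements merged into one kernel-verified Lean document; each statement's English description precedes it below -/
import Mathlib

section
/- Let R be a commutative noetherian local ring, a an ideal of R, S = R/a, and L a finitely generated R-module generated by μ elements. Then Fitt₀(L) + a^μ ⊆ Fitt₀(L ⊗_R S) ⊆ Fitt₀(L) + a, where Fitt₀ denotes the zeroth Fitting ideal over R. -/
/-!
A surjection `R^n → L` composed with `L → L/aL` is a presentation of `L/aL`, which gives
`Fitt₀(L) ⊆ Fitt₀(L/aL)`; and for generators `s₁, …, s_μ` of `L` and `f₁, …, f_μ ∈ a`, the relations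
`fᵢ eᵢ` of `L/aL` have the diagonal minor `f₁ ⋯ f_μ`, which gives `a^μ ⊆ Fitt₀(L/aL)`.
Conversely, by Nakayama every surjection `R^n → L/aL` lifts to a surjection `R^n → L`, and every
relation of the former differs from one of the lift by a vector with entries in `a`, so each
minor of the former is congruent modulo `a` to a minor of the latter.
-/

/-- The `j`-th Fitting ideal of a module `M`, defined intrinsically as the ideal generated by
all `(n-j)`-minors of matrices of relations coming from any surjection `R^n → M`.
(For finitely presented modules this agrees with the classical definition via a presentation
matrix, by invariance of Fitting ideals under change of presentation.) -/
noncomputable def fittingIdeal (R : Type*) [CommRing R] (M : Type*) [AddCommGroup M]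
    [Module R M] (j : ℕ) : Ideal R :=
  Ideal.span { r | ∃ (n : ℕ) (π : (Fin n → R) →ₗ[R] M), Function.Surjective π ∧
    ∃ v : Fin (n - j) → (Fin n → R), (∀ l, v l ∈ LinearMap.ker π) ∧
      ∃ rows : Fin (n - j) → Fin n,
        r = Matrix.det (Matrix.of fun p q : Fin (n - j) => v q (rows p)) }

section

variable {R : Type*} [CommRing R] {M : Type*} [AddCommGroup M] [Module R M]

open Submodule

theorem fittingIdeal_le_of_surjective {N : Type*} [AddCommGroup N] [Module R N]
    (f : M →ₗ[R] N) (hf : Function.Surjective f) (j : ℕ) :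
    fittingIdeal R M j ≤ fittingIdeal R N j := by
  rw [fittingIdeal, Ideal.span_le]
  rintro r ⟨n, π, hπ, v, hv, rows, rfl⟩
  refine Ideal.subset_span ⟨n, f ∘ₗ π, hf.comp hπ, v, fun l => ?_, rows, rfl⟩
  rw [LinearMap.mem_ker, LinearMap.comp_apply, LinearMap.mem_ker.mp (hv l), map_zero]

theorem prod_mem_fittingIdeal_zero {μ : ℕ} (s : Fin μ → M) (hs : span R (Set.range s) = ⊤)
    (f : Fin μ → R) (hf : ∀ i, f i • s i = 0) : ∏ i, f i ∈ fittingIdeal R M 0 := by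
  classical
  have hπ : Function.Surjective (Fintype.linearCombination R s) := by
    rw [← LinearMap.range_eq_top, Fintype.range_linearCombination, hs]
  refine Ideal.subset_span ⟨μ, _, hπ, fun q => Pi.single q (f q), fun q => ?_, id, ?_⟩
  · rw [LinearMap.mem_ker, Fintype.linearCombination_apply_single, hf]
  · have hdiag : (Matrix.of fun p q : Fin μ => (Pi.single q (f q) : Fin μ → R) p) =
        Matrix.diagonal f := by
      ext p q
      by_cases h : p = q <;> simp [h, Pi.single_apply]
    simp only [Nat.sub_zero, id]
    rw [hdiag, Matrix.det_diagonal]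

theorem pow_le_fittingIdeal_zero {a : Ideal R} (ha : a ≤ Module.annihilator R M) {μ : ℕ}
    (s : Fin μ → M) (hs : span R (Set.range s) = ⊤) : a ^ μ ≤ fittingIdeal R M 0 := by
  rw [pow_eq_span_pow_set, span_le]
  rintro x hx
  obtain ⟨f, rfl⟩ := Set.mem_pow.mp hx
  rw [List.prod_ofFn]
  exact prod_mem_fittingIdeal_zero s hs _ fun i => Module.mem_annihilator.mp (ha (f i).2) _

theorem le_annihilator_quotient_smul_top (a : Ideal R) :
    a ≤ Module.annihilator R (M ⧸ a • (⊤ : Submodule R M)) := by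
  intro r hr
  refine Module.mem_annihilator.mpr fun x => ?_
  induction x using Submodule.Quotient.induction_on with
  | H x =>
    rw [← Submodule.Quotient.mk_smul, Submodule.Quotient.mk_eq_zero]
    exact smul_mem_smul hr trivial

theorem apply_mem_of_mem_smul_top {ι : Type*} {a : Ideal R} {x : ι → R}
    (hx : x ∈ a • (⊤ : Submodule R (ι → R))) (i : ι) : x i ∈ a :=
  smul_induction_on (p := fun y : ι → R => y i ∈ a) hx
    (fun _ hr _ _ => Ideal.mul_mem_right _ _ hr) fun _ _ => Ideal.add_mem _

theorem det_sub_det_mem {n : Type*} [Fintype n] [DecidableEq n] {I : Ideal R}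
    {A B : Matrix n n R} (h : ∀ i j, A i j - B i j ∈ I) : A.det - B.det ∈ I := by
  rw [← Ideal.Quotient.eq, RingHom.map_det, RingHom.map_det]
  congr 1
  ext i j
  exact Ideal.Quotient.eq.mpr (h i j)

theorem fittingIdeal_quotient_smul_top_le [Module.Finite R M] {a : Ideal R}
    (ha : a ≤ Ideal.jacobson ⊥) (j : ℕ) :
    fittingIdeal R (M ⧸ a • (⊤ : Submodule R M)) j ≤ fittingIdeal R M j ⊔ a := by
  rw [fittingIdeal, Ideal.span_le]
  rintro r ⟨n, π, hπ, v, hv, rows, rfl⟩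
  obtain ⟨π', hπ'⟩ := Module.projective_lifting_property _ π (a • ⊤ : Submodule R M).mkQ_surjective
  have hπ'_surj : Function.Surjective π' :=
    LinearMap.surjective_of_surjective_comp_mkQ π' a ha (hπ' ▸ hπ)
  have hv' : ∀ q, v q ∈ a • ⊤ ⊔ LinearMap.ker π' := fun q => by
    rw [← comap_smul_top_of_surjective a π' hπ'_surj, ← ker_mkQ (a • ⊤ : Submodule R M),
      ← LinearMap.ker_comp, hπ']
    exact hv q
  choose u hu w hw huw using fun q => mem_sup.mp (hv' q)
  have hminor : Matrix.det (Matrix.of fun p q : Fin (n - j) => w q (rows p)) ∈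
      fittingIdeal R M j :=
    Ideal.subset_span ⟨n, π', hπ'_surj, w, hw, rows, rfl⟩
  have hdiff : Matrix.det (Matrix.of fun p q : Fin (n - j) => v q (rows p)) -
      Matrix.det (Matrix.of fun p q : Fin (n - j) => w q (rows p)) ∈ a :=
    det_sub_det_mem fun p q => by
      simpa [← huw q] using apply_mem_of_mem_smul_top (hu q) (rows p)
  simpa using add_mem_sup hminor hdiff

end

theorem stmt0_general (R : Type*) [CommRing R] [IsLocalRing R]
    (a : Ideal R) (L : Type*) [AddCommGroup L] [Module R L] [Module.Finite R L]
    (μ : ℕ) (s : Fin μ → L) (hs : Submodule.span R (Set.range s) = ⊤) :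
    fittingIdeal R L 0 + a ^ μ ≤
        fittingIdeal R (L ⧸ (a • (⊤ : Submodule R L))) 0 ∧
      fittingIdeal R (L ⧸ (a • (⊤ : Submodule R L))) 0 ≤ fittingIdeal R L 0 + a := by
  set N : Submodule R L := a • ⊤
  have hs' : Submodule.span R (Set.range (N.mkQ ∘ s)) = ⊤ := by
    rw [Set.range_comp, ← Submodule.map_span, hs, Submodule.map_top, Submodule.range_mkQ]
  refine ⟨sup_le ?_ ?_, ?_⟩
  · exact fittingIdeal_le_of_surjective N.mkQ N.mkQ_surjective 0
  · exact pow_le_fittingIdeal_zero (le_annihilator_quotient_smul_top a) _ hs'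
  · by_cases ha : a = ⊤
    · exact le_sup_of_le_right (ha ▸ le_top)
    · refine fittingIdeal_quotient_smul_top_le ?_ 0
      rw [IsLocalRing.jacobson_eq_maximalIdeal ⊥ bot_ne_top]
      exact IsLocalRing.le_maximalIdeal ha

/-- Let `R` be a commutative noetherian local ring, `a` an ideal, `S = R/a`,
and `L` a finitely generated `R`-module generated by `μ` elements.  Then
`Fitt₀(L) + a^μ ⊆ Fitt₀(L ⊗_R S) ⊆ Fitt₀(L) + a`, where `L ⊗_R S = L/aL`. -/
theorem stmt0 (R : Type*) [CommRing R] [IsNoetherianRing R] [IsLocalRing R]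
    (a : Ideal R) (L : Type*) [AddCommGroup L] [Module R L] [Module.Finite R L]
    (μ : ℕ) (s : Fin μ → L) (hs : Submodule.span R (Set.range s) = ⊤) :
    fittingIdeal R L 0 + a ^ μ ≤
        fittingIdeal R (L ⧸ (a • (⊤ : Submodule R L))) 0 ∧
      fittingIdeal R (L ⧸ (a • (⊤ : Submodule R L))) 0 ≤ fittingIdeal R L 0 + a :=
  stmt0_general R a L μ s hs
end

section
/- Let R → S = R/a be a surjection of noetherian local rings, M a finite length S-module, and {M_n}_{n≥1} a lifting system for M along this surjection (i.e., M_1 = M, a^n ⊆ ann_R(M_n), and M_{n+1}/a^n M_{n+1} ≅ M_n for all n ≥ 1). Suppose R is a-adically complete and let L = lim←_n M_n. Then L ⊗_R R/a ≅ M. -/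
/-- The inverse limit of an inverse system of modules `… → M (n+1) → M n → … → M 0`,
realized as the submodule of the product consisting of compatible sequences. -/
def invLim {R : Type*} [Semiring R] {M : ℕ → Type*} [∀ n, AddCommMonoid (M n)]
    [∀ n, Module R (M n)] (f : ∀ n, M (n + 1) →ₗ[R] M n) : Submodule R (∀ n, M n) where
  carrier := {x | ∀ n, f n (x (n + 1)) = x n}
  add_mem' := by intro x y hx hy n; simp [hx n, hy n]
  zero_mem' := by intro n; simp
  smul_mem' := by intro c x hx n; simp [hx n]

/-- Let `R → S = R/a` be a surjection of noetherian local rings with `R`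
`a`-adically complete, `M` a finite length `S`-module, and `{Mₙ}` a lifting system for `M`
(indexed here from `0`, so `M 0 = M`, `a^(n+1) ⊆ ann_R (M n)`, and the transition map
`M (n+1) → M n` is surjective with kernel `a^(n+1) • M (n+1)`).  Then, for
`L = lim← M n`, one has `L ⊗_R R/a ≅ M`, i.e. `L/aL ≅ M 0`. -/
theorem stmt3 (R : Type*) [CommRing R] [IsNoetherianRing R] [IsLocalRing R]
    (a : Ideal R) [IsAdicComplete a R]
    (M : ℕ → Type*) [∀ n, AddCommGroup (M n)] [∀ n, Module R (M n)]
    (hfl : ∀ n, IsFiniteLength R (M n))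
    (hann : ∀ n, a ^ (n + 1) ≤ Module.annihilator R (M n))
    (f : ∀ n, M (n + 1) →ₗ[R] M n)
    (hsurj : ∀ n, Function.Surjective (f n))
    (hker : ∀ n, LinearMap.ker (f n) = (a ^ (n + 1)) • (⊤ : Submodule R (M (n + 1)))) :
    Nonempty ((↥(invLim f) ⧸ (a • (⊤ : Submodule R ↥(invLim f)))) ≃ₗ[R] M 0) := by
  classical
  -- evaluation maps
  let ev : ∀ n, ↥(invLim f) →ₗ[R] M n := fun n => (LinearMap.proj n).comp (invLim f).subtype
  have ev_apply : ∀ n (x : ↥(invLim f)), ev n x = x.1 n := fun n x => rfl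
  have compat : ∀ (x : ↥(invLim f)) n, f n (x.1 (n + 1)) = x.1 n := fun x n => x.2 n
  -- high powers of `a` kill `M n`
  have kill : ∀ n (r : R), r ∈ a ^ (n + 1) → ∀ v : M n, r • v = 0 := fun n r hr v =>
    Module.mem_annihilator.mp (hann n hr) v
  -- lifting elements of `M 0` to the inverse limit
  have lift : ∀ z : M 0, ∃ x : ↥(invLim f), x.1 0 = z := by
    intro z
    choose s hs using hsurj
    exact ⟨⟨fun n => Nat.rec z (fun n gn => s n gn) n, fun n => hs n _⟩, rfl⟩
  -- finite generation of `M 0`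
  have hnoeth : IsNoetherian R (M 0) := (isFiniteLength_iff_isNoetherian_isArtinian.mp (hfl 0)).1
  obtain ⟨k, m, hm⟩ :=
    Submodule.fg_iff_exists_fin_generating_family.mp (IsNoetherian.noetherian (⊤ : Submodule R (M 0)))
  choose ℓ hℓ using fun j => lift (m j)
  have coe_comb : ∀ (cc : Fin k → R) (nn : ℕ),
      ((∑ j, cc j • ℓ j : ↥(invLim f)) : ∀ i, M i) nn = ∑ j, cc j • (ℓ j).1 nn := by
    intro cc nn
    rw [← ev_apply nn, map_sum]
    exact Finset.sum_congr rfl fun j _ => rfl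
  -- the composite maps `F n : M n → M 0`
  let F : ∀ n, M n →ₗ[R] M 0 := fun n => Nat.rec LinearMap.id (fun n Fn => Fn.comp (f n)) n
  have hF : ∀ (x : ↥(invLim f)) n, F n (x.1 n) = x.1 0 := by
    intro x n
    induction n with
    | zero => rfl
    | succ n ih =>
      show F n (f n (x.1 (n + 1))) = x.1 0
      rw [compat x n]; exact ih
  have hkerF : ∀ n, LinearMap.ker (F n) ≤ a • (⊤ : Submodule R (M n)) := by
    intro n
    induction n with
    | zero =>
      intro v hv
      have : v = 0 := hv
      simp [this]
    | succ n ih =>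
      intro v hv
      have h1 : F n (f n v) = 0 := hv
      have h2 : f n v ∈ a • (⊤ : Submodule R (M n)) := ih h1
      have h3 : f n v ∈ (a • (⊤ : Submodule R (M (n + 1)))).map (f n) := by
        rw [Submodule.map_smul'', Submodule.map_top, LinearMap.range_eq_top.mpr (hsurj n)]
        exact h2
      obtain ⟨w, hw, hw2⟩ := h3
      have h4 : v - w ∈ LinearMap.ker (f n) := by
        rw [LinearMap.mem_ker, map_sub, hw2, sub_self]
      rw [hker n] at h4
      have h5 : v - w ∈ a • (⊤ : Submodule R (M (n + 1))) :=
        Submodule.smul_mono_left (Ideal.pow_le_self (Nat.succ_ne_zero n)) h4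
      simpa using add_mem h5 hw
  -- the `ℓ j` generate each `M n`
  have hspan : ∀ n, Submodule.span R (Set.range fun j => (ℓ j).1 n) = ⊤ := by
    intro n
    set N := Submodule.span R (Set.range fun j => (ℓ j).1 n) with hN
    have hstep : (⊤ : Submodule R (M n)) ≤ N ⊔ a • ⊤ := by
      intro v _
      have hFv : F n v ∈ Submodule.span R (Set.range m) := by rw [hm]; trivial
      obtain ⟨c, hc⟩ := (Submodule.mem_span_range_iff_exists_fun R).mp hFv
      have h1 : v - ∑ j, c j • (ℓ j).1 n ∈ LinearMap.ker (F n) := by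
        rw [LinearMap.mem_ker, map_sub, map_sum]
        simp only [map_smul, hF]
        simp only [hℓ, hc, sub_self]
      refine Submodule.mem_sup.mpr ⟨∑ j, c j • (ℓ j).1 n, ?_, v - ∑ j, c j • (ℓ j).1 n,
        hkerF n h1, by abel⟩
      exact Submodule.sum_mem _ fun j _ =>
        Submodule.smul_mem _ _ (Submodule.subset_span ⟨j, rfl⟩)
    have hiter : ∀ i, (⊤ : Submodule R (M n)) ≤ N ⊔ a ^ (i + 1) • ⊤ := by
      intro i
      induction i with
      | zero => simpa [pow_one] using hstep
      | succ i ih =>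
        have htop : N ⊔ a ^ (i + 1) • (⊤ : Submodule R (M n)) = ⊤ := le_antisymm le_top ih
        calc (⊤ : Submodule R (M n)) ≤ N ⊔ a • ⊤ := hstep
          _ = N ⊔ a • (N ⊔ a ^ (i + 1) • ⊤) := by rw [htop]
          _ = N ⊔ (a • N ⊔ a • a ^ (i + 1) • ⊤) := by rw [Submodule.smul_sup]
          _ ≤ N ⊔ (N ⊔ a ^ (i + 2) • ⊤) := by
              gcongr
              · exact Submodule.smul_le_right
              · rw [pow_succ' a (i + 1), ← Ideal.smul_eq_mul, Submodule.smul_assoc]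
          _ = N ⊔ a ^ (i + 2) • ⊤ := by rw [← sup_assoc, sup_idem]
    have hzero : a ^ (n + 1) • (⊤ : Submodule R (M n)) = ⊥ := by
      rw [eq_bot_iff]
      refine Submodule.smul_le.mpr fun r hr v _ => ?_
      rw [Submodule.mem_bot, kill n r hr v]
    have := hiter n
    rw [hzero, sup_bot_eq] at this
    exact le_antisymm le_top this
  -- extraction of coefficients from `I • ⊤`
  have extract : ∀ n (I : Ideal R) (v : M n), v ∈ I • (⊤ : Submodule R (M n)) →
      ∃ c : Fin k → R, (∀ j, c j ∈ I) ∧ v = ∑ j, c j • (ℓ j).1 n := by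
    intro n I v hv
    refine Submodule.smul_induction_on hv ?_ ?_
    · intro r hr w _
      have hw : w ∈ Submodule.span R (Set.range fun j => (ℓ j).1 n) := by
        rw [hspan n]; trivial
      obtain ⟨d, hd⟩ := (Submodule.mem_span_range_iff_exists_fun R).mp hw
      refine ⟨fun j => r * d j, fun j => I.mul_mem_right _ hr, ?_⟩
      rw [← hd, Finset.smul_sum]
      simp [mul_smul]
    · rintro w₁ w₂ ⟨c₁, h₁, e₁⟩ ⟨c₂, h₂, e₂⟩
      exact ⟨fun j => c₁ j + c₂ j, fun j => add_mem (h₁ j) (h₂ j), by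
        simp [e₁, e₂, add_smul, Finset.sum_add_distrib]⟩
  -- one step of the successive approximation
  have step : ∀ n (y : ↥(invLim f)), y.1 n = 0 →
      ∃ c : Fin k → R, (∀ j, c j ∈ a ^ (n + 1)) ∧ (y - ∑ j, c j • ℓ j).1 (n + 1) = 0 := by
    intro n y hy
    have h1 : y.1 (n + 1) ∈ LinearMap.ker (f n) := by
      rw [LinearMap.mem_ker, compat y n, hy]
    rw [hker n] at h1
    obtain ⟨c, hcI, hc⟩ := extract (n + 1) (a ^ (n + 1)) (y.1 (n + 1)) h1
    refine ⟨c, hcI, ?_⟩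
    show ((y - ∑ j, c j • ℓ j : ↥(invLim f)) : ∀ i, M i) (n + 1) = 0
    rw [AddSubgroupClass.coe_sub, Pi.sub_apply, coe_comb, ← hc, sub_self]
  choose cf hcfmem hcfzero using step
  -- kernel of `ev 0` is contained in `a • L`
  have kerle : LinearMap.ker (ev 0) ≤ a • (⊤ : Submodule R ↥(invLim f)) := by
    intro x hx
    have hx0 : x.1 0 = 0 := hx
    let Y : ∀ n, {y : ↥(invLim f) // y.1 n = 0} := fun n =>
      Nat.rec ⟨x, hx0⟩
        (fun n yp => ⟨yp.1 - ∑ j, cf n yp.1 yp.2 j • ℓ j, hcfzero n yp.1 yp.2⟩) n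
    set C : ℕ → Fin k → R := fun n => cf n (Y n).1 (Y n).2 with hC
    have hYsucc : ∀ n, (Y (n + 1)).1 = (Y n).1 - ∑ j, C n j • ℓ j := fun n => rfl
    have hCmem : ∀ n j, C n j ∈ a ^ (n + 1) := fun n j => hcfmem n (Y n).1 (Y n).2 j
    set s : ℕ → Fin k → R := fun N j => ∑ n ∈ Finset.range N, C n j with hs
    have hYs : ∀ N, (Y N).1 = x - ∑ j, s N j • ℓ j := by
      intro N
      induction N with
      | zero =>
        show x = x - ∑ j, s 0 j • ℓ j
        simp [hs]
      | succ N ih =>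
        rw [hYsucc, ih]
        have : ∀ j, s (N + 1) j • ℓ j = s N j • ℓ j + C N j • ℓ j := by
          intro j
          rw [hs]
          simp [Finset.sum_range_succ, add_smul]
        rw [sub_sub, ← Finset.sum_add_distrib]
        congr 1
        exact Finset.sum_congr rfl fun j _ => (this j).symm
    have hidtop : ∀ p : ℕ, (a ^ p • ⊤ : Submodule R R) = a ^ p := by
      intro p
      rw [Ideal.smul_eq_mul, Ideal.mul_top]
    have hcau : ∀ j, ∀ {p q : ℕ}, p ≤ q →
        s p j ≡ s q j [SMOD (a ^ p • ⊤ : Submodule R R)] := by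
      intro j p q hpq
      rw [SModEq.sub_mem, hidtop]
      have hdiff : s p j - s q j = -∑ n ∈ Finset.Ico p q, C n j := by
        rw [hs, neg_eq_iff_eq_neg.symm, neg_sub, Finset.sum_Ico_eq_sub _ hpq]
      rw [hdiff]
      exact neg_mem (Submodule.sum_mem _ fun n hn =>
        Ideal.pow_le_pow_right (le_trans (Finset.mem_Ico.mp hn).1 (Nat.le_succ n)) (hCmem n j))
    have hprec : IsPrecomplete a R := inferInstance
    choose r hr using fun j => hprec.prec (hcau j)
    have hrsub : ∀ j N, s N j - r j ∈ a ^ N := by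
      intro j N
      have := SModEq.sub_mem.mp (hr j N)
      rwa [hidtop] at this
    have hrmem : ∀ j, r j ∈ a := by
      intro j
      have h1 : s 1 j - r j ∈ a := by
        have := hrsub j 1
        rwa [pow_one] at this
      have h2 : s 1 j ∈ a := by
        have hc0 : C 0 j ∈ a := by
          have := hCmem 0 j
          rwa [pow_one] at this
        simpa [hs, Finset.sum_range_one] using hc0
      have : r j = s 1 j - (s 1 j - r j) := by ring
      rw [this]; exact sub_mem h2 h1
    have hxeq : x = ∑ j, r j • ℓ j := by
      have hcoord : ∀ nn, x.1 nn = (∑ j, r j • ℓ j).1 nn := by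
        intro nn
        have h0 : ((Y (nn + 1)).1 : ∀ i, M i) (nn + 1) = 0 := (Y (nn + 1)).2
        have h1 : ((Y (nn + 1)).1 : ∀ i, M i) nn = 0 := by
          have hcp := compat (Y (nn + 1)).1 nn
          rw [h0, map_zero] at hcp
          exact hcp.symm
        rw [hYs] at h1
        rw [AddSubgroupClass.coe_sub, Pi.sub_apply, coe_comb, sub_eq_zero] at h1
        have h3 : ∀ j, s (nn + 1) j • (ℓ j).1 nn = r j • (ℓ j).1 nn := by
          intro j
          have hz : (s (nn + 1) j - r j) • (ℓ j).1 nn = 0 := kill nn _ (hrsub j (nn + 1)) _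
          rw [sub_smul, sub_eq_zero] at hz
          exact hz
        rw [coe_comb, h1]
        exact Finset.sum_congr rfl fun j _ => h3 j
      exact Subtype.ext (funext hcoord)
    rw [hxeq]
    exact Submodule.sum_mem _ fun j _ => Submodule.smul_mem_smul (hrmem j) trivial
  -- the reverse inclusion
  have kerge : a • (⊤ : Submodule R ↥(invLim f)) ≤ LinearMap.ker (ev 0) := by
    refine Submodule.smul_le.mpr fun r hr x _ => ?_
    rw [LinearMap.mem_ker, map_smul, ev_apply]
    exact kill 0 r (by rwa [pow_one]) _
  have hkereq : a • (⊤ : Submodule R ↥(invLim f)) = LinearMap.ker (ev 0) :=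
    le_antisymm kerge kerle
  have hevsurj : Function.Surjective (ev 0) := by
    intro z
    obtain ⟨x, hx⟩ := lift z
    exact ⟨x, hx⟩
  exact ⟨(Submodule.quotEquivOfEq _ _ hkereq).trans ((ev 0).quotKerEquivOfSurjective hevsurj)⟩
end

section
/- Let R → S = R/a be a surjection of noetherian local rings with R a-adically complete, M a finite length S-module, and {M_n}_{n≥1} a lifting system for M along the surjection. Then the inverse limit L = lim←_n M_n is a finitely generated R-module. -/
/-- Auxiliary: construct a full sequence by dependent choice. -/
lemma exists_seq_aux {α : Type*} {P : ℕ → α → Prop} {Q : ℕ → α → α → Prop}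
    (h0 : ∃ c, P 0 c) (hstep : ∀ n c, P n c → ∃ c', P (n + 1) c' ∧ Q n c c') :
    ∃ g : ℕ → α, (∀ n, P n (g n)) ∧ ∀ n, Q n (g n) (g (n + 1)) := by
  classical
  let G : ∀ n, {c : α // P n c} := fun n => Nat.rec ⟨h0.choose, h0.choose_spec⟩
    (fun n p => ⟨(hstep n p.1 p.2).choose, (hstep n p.1 p.2).choose_spec.1⟩) n
  exact ⟨fun n => (G n).1, fun n => (G n).2,
    fun n => (hstep n (G n).1 (G n).2).choose_spec.2⟩

/-- With `R → S = R/a` a surjection of noetherian local rings, `R`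
`a`-adically complete, and `{Mₙ}` a lifting system for a finite length `S`-module
(indexed from `0`), the inverse limit `L = lim← M n` is a finitely generated `R`-module. -/
theorem stmt4 (R : Type*) [CommRing R] [IsNoetherianRing R] [IsLocalRing R]
    (a : Ideal R) [IsAdicComplete a R]
    (M : ℕ → Type*) [∀ n, AddCommGroup (M n)] [∀ n, Module R (M n)]
    (hfl : ∀ n, IsFiniteLength R (M n))
    (hann : ∀ n, a ^ (n + 1) ≤ Module.annihilator R (M n))
    (f : ∀ n, M (n + 1) →ₗ[R] M n)
    (hsurj : ∀ n, Function.Surjective (f n))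
    (hker : ∀ n, LinearMap.ker (f n) = (a ^ (n + 1)) • (⊤ : Submodule R (M (n + 1)))) :
    Module.Finite R ↥(invLim f) := by
  classical
  by_cases ha : a = ⊤
  · -- degenerate case: `R` is the zero ring
    have h1 : (1 : R) = 0 := by
      refine IsHausdorff.haus (IsAdicComplete.toIsHausdorff (I := a)) 1 fun n => ?_
      have : (a ^ n • ⊤ : Submodule R R) = ⊤ := by
        rw [ha, Ideal.top_pow]; exact Submodule.top_smul ⊤
      rw [this]
      exact SModEq.top
    haveI : Subsingleton R := subsingleton_of_zero_eq_one h1.symm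
    haveI := Module.subsingleton R ↥(invLim f)
    infer_instance
  -- main case: `a ≤ m`
  have hja : a ≤ Ideal.jacobson ⊥ := by
    rw [IsLocalRing.jacobson_eq_maximalIdeal ⊥ bot_ne_top]
    exact IsLocalRing.le_maximalIdeal ha
  have hfg : ∀ n, (⊤ : Submodule R (M n)).FG := fun n => by
    haveI := (isFiniteLength_iff_isNoetherian_isArtinian.mp (hfl n)).1
    exact IsNoetherian.noetherian ⊤
  -- pick generators of `M 0`
  obtain ⟨r, v, hv⟩ : ∃ (r : ℕ) (v : Fin r → M 0),
      Submodule.span R (Set.range v) = ⊤ := by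
    obtain ⟨s, hs⟩ := hfg 0
    exact ⟨s.card, fun i => (s.equivFin.symm i : M 0), by
      rw [← hs]; congr 1
      ext x; simp [Set.range_comp]
      constructor
      · rintro ⟨i, rfl⟩; exact (s.equivFin.symm i).2
      · intro hx; exact ⟨s.equivFin ⟨x, hx⟩, by simp⟩⟩
  -- lift the generators to compatible sequences
  let w : Fin r → ∀ n, M n := fun j => fun n =>
    Nat.rec (v j) (fun n u => Function.surjInv (hsurj n) u) n
  have hw : ∀ j n, f n (w j (n + 1)) = w j n := fun j n =>
    Function.surjInv_eq (hsurj n) (w j n)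
  have hwmem : ∀ j, w j ∈ invLim f := fun j n => hw j n
  let y : Fin r → ↥(invLim f) := fun j => ⟨w j, hwmem j⟩
  -- the images of the lifts generate each `M n`
  have hgen : ∀ n, Submodule.span R (Set.range fun j => w j n) = ⊤ := by
    intro n
    induction n with
    | zero => exact hv
    | succ n ih =>
      have htop : (⊤ : Submodule R (M (n + 1))) ≤
          Submodule.span R (Set.range fun j => w j (n + 1)) ⊔ a • ⊤ := by
        intro x _
        have hx : f n x ∈ Submodule.span R (Set.range fun j => w j n) := by
          rw [ih]; trivial
        rw [Submodule.mem_span_range_iff_exists_fun] at hx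
        obtain ⟨c, hc⟩ := hx
        have hk : x - ∑ j, c j • w j (n + 1) ∈ LinearMap.ker (f n) := by
          rw [LinearMap.mem_ker, map_sub, map_sum]
          simp only [map_smul, hw]
          rw [hc, sub_self]
        rw [hker n] at hk
        have h2 : x - ∑ j, c j • w j (n + 1) ∈ (a • ⊤ : Submodule R (M (n + 1))) :=
          Submodule.smul_mono_left (Ideal.pow_le_self (Nat.succ_ne_zero n)) hk
        have hxeq : x = (∑ j, c j • w j (n + 1)) + (x - ∑ j, c j • w j (n + 1)) := by
          abel
        rw [hxeq]
        exact Submodule.add_mem_sup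
          (Submodule.sum_mem _ fun j _ => Submodule.smul_mem _ _
            (Submodule.subset_span ⟨j, rfl⟩)) h2
      have hnak := Submodule.sup_eq_sup_smul_of_le_smul_of_le_jacobson
        (hfg (n + 1)) hja htop
      rw [sup_top_eq, Submodule.bot_smul, sup_bot_eq] at hnak
      exact hnak.symm
  -- main claim: the lifts generate the inverse limit
  have main : ∀ z : ↥(invLim f), z ∈ Submodule.span R (Set.range y) := by
    intro z
    have hz : ∀ n, f n ((z : ∀ k, M k) (n + 1)) = (z : ∀ k, M k) n := z.2
    -- construct coefficients by successive approximation
    have h0 : ∃ c : Fin r → R, (z : ∀ k, M k) 0 = ∑ j, c j • w j 0 := by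
      have : (z : ∀ k, M k) 0 ∈ Submodule.span R (Set.range fun j => w j 0) := by
        rw [hgen 0]; trivial
      rw [Submodule.mem_span_range_iff_exists_fun] at this
      obtain ⟨c, hc⟩ := this
      exact ⟨c, hc.symm⟩
    have key : ∀ n (c : Fin r → R), (z : ∀ k, M k) n = ∑ j, c j • w j n →
        ∃ c' : Fin r → R, ((z : ∀ k, M k) (n + 1) = ∑ j, c' j • w j (n + 1)) ∧
          ∀ j, c' j - c j ∈ a ^ (n + 1) := by
      intro n c hc
      have hd : (z : ∀ k, M k) (n + 1) - ∑ j, c j • w j (n + 1) ∈ LinearMap.ker (f n) := by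
        rw [LinearMap.mem_ker, map_sub, map_sum]
        simp only [map_smul, hw]
        rw [hz n, hc, sub_self]
      rw [hker n, ← hgen (n + 1),
        Submodule.mem_ideal_smul_span_iff_exists_sum] at hd
      obtain ⟨e, he, hes⟩ := hd
      rw [Finsupp.sum_fintype _ _ (fun i => by simp)] at hes
      refine ⟨fun j => c j + e j, ?_, fun j => by simpa using he j⟩
      have hsum : ∑ j, (c j + e j) • w j (n + 1) =
          (∑ j, c j • w j (n + 1)) + ∑ j, e j • w j (n + 1) := by
        rw [← Finset.sum_add_distrib]
        simp [add_smul]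
      rw [hsum, hes]
      abel
    obtain ⟨g, hg, hgd⟩ := exists_seq_aux h0 key
    -- the coefficient sequences are Cauchy
    have hcauchy : ∀ j, ∀ m n : ℕ, m ≤ n → g n j - g m j ∈ a ^ m := by
      intro j m n hmn
      induction n, hmn using Nat.le_induction with
      | base => simp
      | succ n hmn ih =>
        have : g (n + 1) j - g m j = (g (n + 1) j - g n j) + (g n j - g m j) := by abel
        rw [this]
        exact Ideal.add_mem _ (Ideal.pow_le_pow_right (by omega) (hgd n j)) ih
    -- pass to the limit using completeness
    have hb : ∀ j, ∃ b : R, ∀ n, g n j ≡ b [SMOD (a ^ n • ⊤ : Submodule R R)] := by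
      intro j
      refine IsPrecomplete.prec (IsAdicComplete.toIsPrecomplete (I := a)) ?_
      intro m n hmn
      rw [SModEq.sub_mem]
      have : g m j - g n j ∈ a ^ m := by
        have := hcauchy j m n hmn
        simpa using (a ^ m).neg_mem this
      simpa using Submodule.smul_mem_smul this (Submodule.mem_top (R := R) (x := (1 : R)))
    choose b hbs using hb
    have hbmem : ∀ j n, g n j - b j ∈ a ^ n := by
      intro j n
      have := SModEq.sub_mem.mp (hbs j n)
      have h2 : (a ^ n • ⊤ : Submodule R R) ≤ (a ^ n : Ideal R) :=
        Submodule.smul_le.2 fun r hr x _ => Ideal.mul_mem_right x _ hr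
      exact h2 this
    -- the limit coefficients work
    have hzeq : z = ∑ j, b j • y j := by
      apply Subtype.ext
      have hco : ((∑ j, b j • y j : ↥(invLim f)) : ∀ k, M k) = ∑ j, b j • w j := by
        rw [show ((∑ j, b j • y j : ↥(invLim f)) : ∀ k, M k) =
            (invLim f).subtype (∑ j, b j • y j) from rfl, map_sum]
        rfl
      rw [hco]
      funext n
      have hcn : (z : ∀ k, M k) n = ∑ j, g (n + 1) j • w j n := by
        rw [← hz n, hg (n + 1), map_sum]
        simp only [map_smul, hw]
      rw [Finset.sum_apply, hcn]
      refine Finset.sum_congr rfl fun j _ => ?_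
      have hann' : (g (n + 1) j - b j) • w j n = 0 := by
        have hmem : g (n + 1) j - b j ∈ Module.annihilator R (M n) :=
          hann n (hbmem j (n + 1))
        exact Module.mem_annihilator.mp hmem _
      have : g (n + 1) j • w j n - b j • w j n = 0 := by
        rw [← sub_smul]; exact hann'
      have := sub_eq_zero.mp this
      simpa using this
    rw [hzeq]
    exact Submodule.sum_mem _ fun j _ => Submodule.smul_mem _ _
      (Submodule.subset_span ⟨j, rfl⟩)
  exact ⟨⟨Finset.univ.image y, by
    rw [Finset.coe_image, Finset.coe_univ, Set.image_univ]
    exact top_unique fun z _ => main z⟩⟩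
end

section
/- Let R → S = R/a be a surjection of noetherian local rings with R a-adically complete, M a finite length S-module, and {M_n}_{n≥1} a lifting system for M along the surjection with associated lift L = lim←_n M_n. Then for each n ≥ 1, L ⊗_R R/a^n ≅ M_n, and the minimal number of generators of L over R equals the minimal number of generators of M_n over R for every n ≥ 1. -/
/-- The minimal number of generators of an `R`-module. -/
noncomputable def minGen (R : Type*) [Semiring R] (M : Type*) [AddCommMonoid M]
    [Module R M] : ℕ :=
  sInf {k | ∃ s : Finset M, s.card = k ∧ Submodule.span R (s : Set M) = ⊤}

/-!
The projection `L → Mₙ` from the inverse limit is surjective because the transition maps are, and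
its kernel is `a^(n+1) L`. For the latter, pick generators `t` of `a^(n+1)`; if `x` vanishes in
`M_{n+m}`, its image in `M_{n+m+1}` lies in `a^(n+1+m) M_{n+m+1}`, so it is `∑ t • u t` with
`u t ∈ a^m M_{n+m+1}`, and lifts of the `u t` to `L` vanish in `M_k` for `k < m`. Iterating, the
corrections at stage `m` vanish below `m`, so they sum coordinatewise in `L` and exhibit `x` as
`∑ t • y t`. Hence `L/a^(n+1) L ≅ Mₙ`.

For the generator counts, a finite set whose image generates `Mₙ` generates `L` modulo `aL`. As `L`
is `a`-adically separated and `R` is `a`-adically complete, so is `Rˢ`, and a map `Rˢ → L` that is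
onto modulo `a` is onto; thus generators of `Mₙ` lift to generators of `L`.
-/

open Function Submodule

section Adic

variable {R : Type*} [CommRing R] {I : Ideal R} {N : Type*} [AddCommGroup N] [Module R N]

theorem map_smul_top_le {P : Type*} [AddCommGroup P] [Module R P] (g : N →ₗ[R] P) :
    (I • ⊤ : Submodule R N).map g ≤ I • ⊤ :=
  (map_smul'' I ⊤ g).trans_le (smul_mono_right I le_top)

theorem smul_top_eq_bot_of_le_annihilator (h : I ≤ Module.annihilator R N) :
    I • (⊤ : Submodule R N) = ⊥ :=
  eq_bot_iff.2 <| (smul_mono_left (h.trans_eq annihilator_top.symm)).trans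
    (annihilator_smul ⊤).le

theorem mem_smul_top_pi_iff {ι : Type*} [Finite ι] {x : ι → N} :
    x ∈ I • (⊤ : Submodule R (ι → N)) ↔ ∀ i, x i ∈ I • (⊤ : Submodule R N) := by
  classical
  have := Fintype.ofFinite ι
  refine ⟨fun hx i => map_smul_top_le (LinearMap.proj i : (ι → N) →ₗ[R] N) (mem_map_of_mem hx),
    fun hx => ?_⟩
  rw [← Finset.univ_sum_single x]
  exact sum_mem fun i _ => map_smul_top_le (LinearMap.single R (fun _ => N) i)
    (mem_map_of_mem (hx i))

instance isPrecomplete_pi {ι : Type*} [Finite ι] [IsPrecomplete I N] : IsPrecomplete I (ι → N) where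
  prec' g hg := by
    choose L hL using fun i => IsPrecomplete.prec ‹_› (f := fun n => g n i) fun h =>
      SModEq.sub_mem.2 (mem_smul_top_pi_iff.1 (SModEq.sub_mem.1 (hg h)) i)
    exact ⟨L, fun n =>
      SModEq.sub_mem.2 (mem_smul_top_pi_iff.2 fun i => SModEq.sub_mem.1 (hL i n))⟩

theorem span_eq_top_of_span_sup_smul_top_eq_top [IsPrecomplete I R] [IsHausdorff I N]
    {s : Set N} (hs : s.Finite) (h : span R s ⊔ I • ⊤ = ⊤) : span R s = ⊤ := by
  have := hs.fintype
  have hrange := Fintype.range_linearCombination R ((↑) : s → N)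
  rw [Subtype.range_coe] at hrange
  rw [← hrange, LinearMap.range_eq_top]
  refine surjective_of_mkQ_comp_surjective (I := I) fun q => ?_
  obtain ⟨y, rfl⟩ := mkQ_surjective _ q
  obtain ⟨u, hu, v, hv, rfl⟩ := mem_sup.1 (h.symm ▸ mem_top : y ∈ span R s ⊔ I • ⊤)
  obtain ⟨c, rfl⟩ := hrange ▸ hu
  exact ⟨c, by simpa [Submodule.Quotient.eq] using hv⟩

end Adic

theorem minGen_eq_of_surjective {R L N : Type*} [Semiring R] [AddCommMonoid L] [Module R L]
    [AddCommMonoid N] [Module R N] (g : L →ₗ[R] N) (hg : Surjective g)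
    (hlift : ∀ s : Finset L, span R (g '' s) = ⊤ → span R (s : Set L) = ⊤) :
    minGen R L = minGen R N := by
  classical
  refine csInf_eq_csInf_of_forall_exists_le ?_ ?_
  · rintro _ ⟨s, rfl, hs⟩
    refine ⟨_, ⟨s.image g, rfl, ?_⟩, Finset.card_image_le⟩
    rw [Finset.coe_image, span_image, hs, Submodule.map_top, LinearMap.range_eq_top.2 hg]
  · rintro _ ⟨t, rfl, ht⟩
    refine ⟨_, ⟨t.image (surjInv hg), Finset.card_image_of_injective _ (injective_surjInv hg),
      hlift _ ?_⟩, le_rfl⟩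
    rwa [Finset.coe_image, ← Set.image_comp, (rightInverse_surjInv hg).comp_eq_id, Set.image_id]

theorem exists_sum_smul_of_mem_span_smul {R X : Type*} [CommRing R] [AddCommGroup X]
    [Module R X] {T : Finset R} {P : Submodule R X} {z : X} (hz : z ∈ Ideal.span (T : Set R) • P) :
    ∃ u : R → X, (∀ t, u t ∈ P) ∧ z = ∑ t ∈ T, t • u t := by
  classical
  rw [span_smul_eq, mem_set_smul] at hz
  obtain ⟨c, hc, rfl⟩ := hz
  refine ⟨fun t => c t, fun t => (c t).2, ?_⟩
  rw [Finsupp.sum, AddSubmonoid.coe_finsetSum]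
  exact Finset.sum_subset (by exact_mod_cast hc) fun t _ ht => by
    simp [Finsupp.notMem_support_iff.1 ht]

namespace invLim

variable {R : Type*} [CommRing R] {M : ℕ → Type*} [∀ n, AddCommGroup (M n)]
  [∀ n, Module R (M n)] (f : ∀ n, M (n + 1) →ₗ[R] M n) {a : Ideal R}

def proj (n : ℕ) : invLim f →ₗ[R] M n := LinearMap.proj n ∘ₗ (invLim f).subtype

@[simp]
theorem proj_apply (n : ℕ) (x : invLim f) : proj f n x = (x : ∀ k, M k) n := rfl

theorem map_proj_succ (x : invLim f) (n : ℕ) : f n (proj f (n + 1) x) = proj f n x := x.2 n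

variable {f} in
@[ext]
theorem ext {x y : invLim f} (h : ∀ n, proj f n x = proj f n y) : x = y :=
  Subtype.ext (funext h)

theorem proj_mem_of_le {S : ∀ n, Submodule R (M n)} (hS : ∀ n, (S (n + 1)).map (f n) ≤ S n)
    (x : invLim f) {k N : ℕ} (hkN : k ≤ N) (hx : proj f N x ∈ S N) : proj f k x ∈ S k := by
  induction N, hkN using Nat.le_induction with
  | base => exact hx
  | succ N _ ih => exact ih (map_proj_succ f x N ▸ hS N (mem_map_of_mem hx))

theorem proj_eq_zero_of_le (x : invLim f) {k N : ℕ} (hkN : k ≤ N) (hx : proj f N x = 0) :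
    proj f k x = 0 :=
  proj_mem_of_le f (S := fun _ => ⊥) (fun n => (map_bot (f n)).le) x hkN hx

theorem proj_surjective (hsurj : ∀ n, Surjective (f n)) (n : ℕ) : Surjective (proj f n) := by
  -- `proj (n + 1)` for `f` is `proj n` for the shifted system `f (· + 1)`
  induction n generalizing M with
  | zero =>
    intro m
    exact ⟨⟨fun k => Nat.rec m (fun k y => surjInv (hsurj k) y) k,
      fun k => surjInv_eq (hsurj k) _⟩, rfl⟩
  | succ n ih =>
    intro m
    obtain ⟨y, rfl⟩ :=
      ih (M := fun k => M (k + 1)) (fun k => f (k + 1)) (fun k => hsurj (k + 1)) m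
    refine ⟨⟨fun k => Nat.casesOn (motive := M) k (f 0 (y.1 0)) y.1, ?_⟩, rfl⟩
    rintro (_ | k)
    · rfl
    · exact y.2 k

theorem pow_smul_top_le_ker_proj (hann : ∀ n, a ^ (n + 1) ≤ Module.annihilator R (M n)) (n : ℕ) :
    a ^ (n + 1) • ⊤ ≤ LinearMap.ker (proj f n) := fun x hx => by
  simpa [smul_top_eq_bot_of_le_annihilator (hann n)] using
    map_smul_top_le (proj f n) (mem_map_of_mem hx)

theorem isHausdorff (hann : ∀ n, a ^ (n + 1) ≤ Module.annihilator R (M n)) :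
    IsHausdorff a (invLim f) :=
  ⟨fun x hx => ext fun k => pow_smul_top_le_ker_proj f hann k <| by
    simpa [SModEq.sub_mem] using hx (k + 1)⟩

theorem exists_proj_eq_sum (z : ℕ → invLim f) (hz : ∀ m k, k < m → proj f k (z m) = 0) :
    ∃ y : invLim f, ∀ k, proj f k y = ∑ m ∈ Finset.range (k + 1), proj f k (z m) := by
  refine ⟨⟨fun k => ∑ m ∈ Finset.range (k + 1), proj f k (z m), fun k => ?_⟩, fun k => rfl⟩
  simp only [map_sum, map_proj_succ]
  rw [Finset.sum_range_succ, hz (k + 1) k k.lt_succ_self, add_zero]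

theorem mem_span_smul_top_of_approx (T : Finset R) (n : ℕ)
    (step : ∀ m (x : invLim f), proj f (n + m) x = 0 → ∃ d : R → invLim f,
      (∀ t k, k < m → proj f k (d t) = 0) ∧ proj f (n + m + 1) (x - ∑ t ∈ T, t • d t) = 0)
    {x : invLim f} (hx : proj f n x = 0) :
    x ∈ Ideal.span (T : Set R) • (⊤ : Submodule R (invLim f)) := by
  choose! d hd_small hd_rem using step
  let r : ℕ → invLim f := fun m => Nat.rec x (fun m y => y - ∑ t ∈ T, t • d m y t) m
  have hr : ∀ m, proj f (n + m) (r m) = 0 := by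
    intro m
    induction m with
    | zero => exact hx
    | succ m ih => exact hd_rem m _ ih
  choose y hy using fun t =>
    exists_proj_eq_sum f (fun m => d m (r m) t) fun m => hd_small m (r m) (hr m) t
  have hxy : x = ∑ t ∈ T, t • y t := by
    ext k
    have hrk : proj f k (r (k + 1)) = 0 := proj_eq_zero_of_le f _ (by omega) (hr (k + 1))
    have htel : ∀ m, ∑ t ∈ T, t • proj f k (d m (r m) t) =
        proj f k (r m) - proj f k (r (m + 1)) := fun m => by simp [r]
    simp only [map_sum, map_smul, hy, Finset.smul_sum]
    rw [Finset.sum_comm, Finset.sum_congr rfl fun m _ => htel m, Finset.sum_range_sub', hrk,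
      sub_zero]
    rfl
  rw [hxy]
  exact sum_mem fun t ht => smul_mem_smul (Ideal.subset_span ht) mem_top

theorem exists_proj_sub_sum_smul_eq_zero
    (hann : ∀ n, a ^ (n + 1) ≤ Module.annihilator R (M n))
    (hsurj : ∀ n, Surjective (f n))
    (hker : ∀ n, LinearMap.ker (f n) = (a ^ (n + 1)) • (⊤ : Submodule R (M (n + 1))))
    {n : ℕ} {T : Finset R} (hT : Ideal.span (T : Set R) = a ^ (n + 1))
    (m : ℕ) (x : invLim f) (hx : proj f (n + m) x = 0) :
    ∃ d : R → invLim f,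
      (∀ t k, k < m → proj f k (d t) = 0) ∧ proj f (n + m + 1) (x - ∑ t ∈ T, t • d t) = 0 := by
  have hmem : proj f (n + m + 1) x ∈ Ideal.span (T : Set R) • (a ^ m • ⊤ : Submodule R _) := by
    have : proj f (n + m + 1) x ∈ LinearMap.ker (f (n + m)) := by
      rw [LinearMap.mem_ker, map_proj_succ, hx]
    rw [hker] at this
    rwa [hT, ← Submodule.mul_smul, ← pow_add, Nat.add_right_comm n 1 m]
  obtain ⟨u, hu, hxu⟩ := exists_sum_smul_of_mem_span_smul hmem
  choose d hd using fun t => proj_surjective f hsurj (n + m + 1) (u t)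
  refine ⟨d, fun t k hk => ?_, by simp only [map_sub, map_sum, map_smul, hd, hxu, sub_self]⟩
  have hdk : proj f k (d t) ∈ (a ^ m • ⊤ : Submodule R (M k)) :=
    proj_mem_of_le f (S := fun _ => a ^ m • ⊤) (fun j => map_smul_top_le (f j)) (d t)
      (show k ≤ n + m + 1 by omega) (hd t ▸ hu t)
  rwa [smul_top_eq_bot_of_le_annihilator ((Ideal.pow_le_pow_right hk).trans (hann k))] at hdk

theorem ker_proj_eq (ha : a.FG)
    (hann : ∀ n, a ^ (n + 1) ≤ Module.annihilator R (M n))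
    (hsurj : ∀ n, Surjective (f n))
    (hker : ∀ n, LinearMap.ker (f n) = (a ^ (n + 1)) • (⊤ : Submodule R (M (n + 1))))
    (n : ℕ) : LinearMap.ker (proj f n) = a ^ (n + 1) • ⊤ := by
  refine le_antisymm (fun x hx => ?_) (pow_smul_top_le_ker_proj f hann n)
  obtain ⟨T, hT⟩ := ha.pow (n := n + 1)
  rw [← hT]
  exact mem_span_smul_top_of_approx f T n
    (exists_proj_sub_sum_smul_eq_zero f hann hsurj hker hT) hx

end invLim

theorem stmt6_general (R : Type*) [CommRing R] [IsNoetherianRing R]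
    (a : Ideal R) [IsAdicComplete a R]
    (M : ℕ → Type*) [∀ n, AddCommGroup (M n)] [∀ n, Module R (M n)]
    (hann : ∀ n, a ^ (n + 1) ≤ Module.annihilator R (M n))
    (f : ∀ n, M (n + 1) →ₗ[R] M n)
    (hsurj : ∀ n, Function.Surjective (f n))
    (hker : ∀ n, LinearMap.ker (f n) = (a ^ (n + 1)) • (⊤ : Submodule R (M (n + 1)))) :
    ∀ n, Nonempty ((↥(invLim f) ⧸ ((a ^ (n + 1)) • (⊤ : Submodule R ↥(invLim f)))) ≃ₗ[R] M n)
      ∧ minGen R ↥(invLim f) = minGen R (M n) := by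
  intro n
  have hker_proj := invLim.ker_proj_eq f (IsNoetherian.noetherian a) hann hsurj hker n
  have hsurj_proj := invLim.proj_surjective f hsurj n
  have := invLim.isHausdorff f hann
  refine ⟨⟨(quotEquivOfEq _ _ hker_proj.symm).trans
    (LinearMap.quotKerEquivOfSurjective _ hsurj_proj)⟩, minGen_eq_of_surjective _ hsurj_proj
    fun s hs => span_eq_top_of_span_sup_smul_top_eq_top (I := a) s.finite_toSet (top_unique ?_)⟩
  calc ⊤ = comap (invLim.proj f n) (map (invLim.proj f n) (span R s)) := by
        rw [map_span, hs, comap_top]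
    _ = span R s ⊔ a ^ (n + 1) • ⊤ := by rw [comap_map_eq, hker_proj]
    _ ≤ span R s ⊔ a • ⊤ :=
        sup_le_sup_left (smul_mono_left (Ideal.pow_le_self n.succ_ne_zero)) _

/-- With `R → S = R/a` a surjection of noetherian local rings, `R`
`a`-adically complete, and `{Mₙ}` a lifting system for a finite length `S`-module
(indexed from `0`), the associated lift `L = lim← M n` satisfies
`L ⊗_R R/a^(n+1) ≅ M n` for every `n`, and the minimal number of generators of `L`
over `R` equals that of each `M n`. -/
theorem stmt6 (R : Type*) [CommRing R] [IsNoetherianRing R] [IsLocalRing R]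
    (a : Ideal R) [IsAdicComplete a R]
    (M : ℕ → Type*) [∀ n, AddCommGroup (M n)] [∀ n, Module R (M n)]
    (hfl : ∀ n, IsFiniteLength R (M n))
    (hann : ∀ n, a ^ (n + 1) ≤ Module.annihilator R (M n))
    (f : ∀ n, M (n + 1) →ₗ[R] M n)
    (hsurj : ∀ n, Function.Surjective (f n))
    (hker : ∀ n, LinearMap.ker (f n) = (a ^ (n + 1)) • (⊤ : Submodule R (M (n + 1)))) :
    ∀ n, Nonempty ((↥(invLim f) ⧸ ((a ^ (n + 1)) • (⊤ : Submodule R ↥(invLim f)))) ≃ₗ[R] M n)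
      ∧ minGen R ↥(invLim f) = minGen R (M n) :=
  stmt6_general R a M hann f hsurj hker
end

section
/- Let S be a noetherian local ring and x₁, ..., x_d and y₁, ..., y_d two maximal S-regular sequences, with ideals I = (x₁,...,x_d) and J = (y₁,...,y_d). Given elements f₁, ..., f_d ∈ S such that x_i f_j − x_j f_i ∈ J for all i, j, there is a well-defined S-linear map η: I → S/J sending x_i to the class of −f_i. (Well-definedness uses that the only relations on a regular sequence are the Koszul relations.) -/
/-!
Sending `c ↦ ∑ cᵢ xᵢ` identifies `I` with `Sᵈ` modulo the syzygies of `x`, so `η` exists as soon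
as `c ↦ -∑ cᵢ fᵢ mod J` kills every syzygy. For a weakly regular sequence this reduces to the
Koszul relations `xᵢ eⱼ - xⱼ eᵢ`, which it kills by hypothesis. The reduction is an induction on
`d`: regularity of `x_d` modulo `(x₁, …, x_{d-1})` writes the last coefficient of a syzygy as
`∑ uᵢ xᵢ`, and subtracting `∑ uᵢ (xᵢ e_d - x_d eᵢ)` leaves a syzygy of `x₁, …, x_{d-1}`.
-/

open RingTheory.Sequence

lemma Ideal.ofList_ofFn {S : Type*} [CommRing S] {n : ℕ} (x : Fin n → S) :
    Ideal.ofList (List.ofFn x) = Ideal.span (Set.range x) :=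
  congrArg Ideal.span (Set.ext fun _ => List.mem_ofFn)

lemma Ideal.mem_of_isSMulRegular_quotient_of_mul_mem {S : Type*} [CommRing S] {I : Ideal S}
    {r c : S} (hr : IsSMulRegular (S ⧸ (I • ⊤ : Submodule S S)) r) (h : r * c ∈ I) : c ∈ I := by
  rw [← Ideal.mul_top I, ← Ideal.smul_eq_mul] at h ⊢
  exact mem_of_isSMulRegular_quotient_of_smul_mem hr h

theorem RingTheory.Sequence.IsWeaklyRegular.sum_smul_eq_zero {S M : Type*} [CommRing S]
    [AddCommGroup M] [Module S M]
    {d : ℕ} {x : Fin d → S} (hx : IsWeaklyRegular S (List.ofFn x)) {m : Fin d → M}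
    (hm : ∀ i j, x i • m j = x j • m i) {c : Fin d → S} (hc : ∑ i, c i • x i = 0) :
    ∑ i, c i • m i = 0 := by
  induction d with
  | zero => simp
  | succ n ih =>
    rw [List.ofFn_succ', List.concat_eq_append, isWeaklyRegular_append_iff,
      isWeaklyRegular_singleton_iff, Ideal.ofList_ofFn] at hx
    obtain ⟨hx', hlast⟩ := hx
    rw [Fin.sum_univ_castSucc] at hc ⊢
    have hmem : x (Fin.last n) * c (Fin.last n) ∈ Ideal.span (Set.range (x ∘ Fin.castSucc)) := by
      rw [mul_comm, ← smul_eq_mul, eq_neg_of_add_eq_zero_right hc]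
      exact neg_mem (Ideal.sum_mem _ fun i _ =>
        Ideal.mul_mem_left _ _ (Ideal.subset_span (Set.mem_range_self i)))
    obtain ⟨u, hu⟩ := (Submodule.mem_span_range_iff_exists_fun S).mp
      (Ideal.mem_of_isSMulRegular_quotient_of_mul_mem hlast hmem)
    have hsyz : ∑ i : Fin n, (c i.castSucc + u i * x (Fin.last n)) • x i.castSucc = 0 := by
      calc ∑ i : Fin n, (c i.castSucc + u i * x (Fin.last n)) • x i.castSucc
          = ∑ i : Fin n, c i.castSucc • x i.castSucc
              + (∑ i : Fin n, u i • x i.castSucc) • x (Fin.last n) := by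
            simp only [smul_eq_mul, Finset.sum_mul, ← Finset.sum_add_distrib]
            exact Finset.sum_congr rfl fun i _ => by ring
        _ = 0 := by rw [hu]; exact hc
    have key := ih hx' (fun i j => hm i.castSucc j.castSucc) hsyz
    have hlast_m : c (Fin.last n) • m (Fin.last n) =
        ∑ i : Fin n, (u i * x (Fin.last n)) • m i.castSucc := by
      simp only [← hu, Finset.sum_smul, smul_assoc, hm _ (Fin.last n), mul_smul]
    rw [hlast_m, ← Finset.sum_add_distrib]
    simpa only [add_smul] using key

lemma LinearMap.exists_apply_eq_of_ker_le {R M N P : Type*} [Ring R]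
    [AddCommGroup M] [AddCommGroup N] [AddCommGroup P] [Module R M] [Module R N] [Module R P]
    {φ : M →ₗ[R] N} {ψ : M →ₗ[R] P} (h : LinearMap.ker φ ≤ LinearMap.ker ψ) :
    ∃ η : LinearMap.range φ →ₗ[R] P, ∀ m, η ⟨φ m, LinearMap.mem_range_self φ m⟩ = ψ m :=
  ⟨(LinearMap.ker φ).liftQ ψ h ∘ₗ φ.quotKerEquivRange.symm.toLinearMap, fun m => by
    rw [LinearMap.comp_apply, LinearEquiv.coe_coe, φ.quotKerEquivRange_symm_apply_image]
    rfl⟩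

theorem stmt17_general (S : Type*) [CommRing S]
    (d : ℕ) (x y : Fin d → S)
    (hx : RingTheory.Sequence.IsRegular S (List.ofFn x))
    (f : Fin d → S)
    (hf : ∀ i j, x i * f j - x j * f i ∈ Ideal.span (Set.range y)) :
    ∃ η : ↥(Ideal.span (Set.range x)) →ₗ[S] (S ⧸ Ideal.span (Set.range y)),
      ∀ i, η ⟨x i, Ideal.subset_span (Set.mem_range_self i)⟩ =
        Ideal.Quotient.mk (Ideal.span (Set.range y)) (-(f i)) := by
  set J := Ideal.span (Set.range y)
  set m : Fin d → S ⧸ J := fun i => Ideal.Quotient.mk J (-(f i))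
  have hm : ∀ i j, x i • m j = x j • m i := fun i j => by
    simp only [m, Algebra.smul_def, Ideal.Quotient.algebraMap_eq, ← map_mul,
      Ideal.Quotient.eq]
    convert neg_mem (hf i j) using 1
    ring
  have hker : LinearMap.ker (Fintype.linearCombination S x) ≤
      LinearMap.ker (Fintype.linearCombination S m) := fun c hc => by
    simp only [LinearMap.mem_ker, Fintype.linearCombination_apply] at hc ⊢
    exact hx.toIsWeaklyRegular.sum_smul_eq_zero hm hc
  obtain ⟨η, hη⟩ := LinearMap.exists_apply_eq_of_ker_le hker
  refine ⟨η ∘ₗ (LinearEquiv.ofEq _ _ (Fintype.range_linearCombination S x).symm).toLinearMap,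
    fun i => ?_⟩
  have hxi : Fintype.linearCombination S x (Pi.single i 1) = x i := by
    rw [Fintype.linearCombination_apply_single, one_smul]
  calc η ⟨x i, _⟩ = η ⟨_, LinearMap.mem_range_self _ (Pi.single i 1)⟩ :=
        congrArg η (Subtype.ext hxi.symm)
    _ = m i := by rw [hη, Fintype.linearCombination_apply_single, one_smul]

/-- Let `S` be a noetherian local ring and `x₁, …, x_d`, `y₁, …, y_d`
two maximal `S`-regular sequences, with `I = (x₁, …, x_d)` and `J = (y₁, …, y_d)`.
Given `f₁, …, f_d ∈ S` with `x_i f_j − x_j f_i ∈ J` for all `i, j`, there is a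
well-defined `S`-linear map `η : I → S/J` sending `x_i` to the class of `−f_i`. -/
theorem stmt17 (S : Type*) [CommRing S] [IsNoetherianRing S] [IsLocalRing S]
    (d : ℕ) (x y : Fin d → S)
    (hx : RingTheory.Sequence.IsRegular S (List.ofFn x))
    (hxmax : ∀ r : S, ¬ RingTheory.Sequence.IsRegular S (List.ofFn x ++ [r]))
    (hy : RingTheory.Sequence.IsRegular S (List.ofFn y))
    (hymax : ∀ r : S, ¬ RingTheory.Sequence.IsRegular S (List.ofFn y ++ [r]))
    (f : Fin d → S)
    (hf : ∀ i j, x i * f j - x j * f i ∈ Ideal.span (Set.range y)) :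
    ∃ η : ↥(Ideal.span (Set.range x)) →ₗ[S] (S ⧸ Ideal.span (Set.range y)),
      ∀ i, η ⟨x i, Ideal.subset_span (Set.mem_range_self i)⟩ =
        Ideal.Quotient.mk (Ideal.span (Set.range y)) (-(f i)) :=
  stmt17_general S d x y hx f hf
end
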